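/- arXiv:1701.04987 — 2 statements merged into one kernel-verified Lean document; each statement's English description precedes it below -/
import Mathlib

section
/- Let D_n, D be self-adjoint operators on a separable Hilbert space H. If for every f in dom(D) there exists f_n ∈ dom(D_n) with (f_n, D_n f_n) → (f, D f) in H × H, then the orthogonal projections P_n onto the graphs of D_n converge in the strong operator topology to the orthogonal projection P onto the graph of D. -/
open Filter Topology

variable {H : Type*} [NormedAddCommGroup H] [InnerProductSpace ℂ H] [CompleteSpace H]
  [TopologicalSpace.SeparableSpace H]

/-- The graph of a `LinearPMap`, viewed as a submodule of the Hilbert space `H ×₂ H`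
(the product equipped with the `L²` inner product). -/
noncomputable def graphL2 (D : H →ₗ.[ℂ] H) : Submodule ℂ (WithLp 2 (H × H)) :=
  D.graph.comap (WithLp.linearEquiv 2 ℂ (H × H)).toLinearMap

/-- `P` is the orthogonal projection of `H ×₂ H` onto the subspace `K`. -/
def IsOrthProjOnto (K : Submodule ℂ (WithLp 2 (H × H)))
    (P : WithLp 2 (H × H) → WithLp 2 (H × H)) : Prop :=
  ∀ x, P x ∈ K ∧ x - P x ∈ Kᗮ

/-!
The rotation `J (f, g) = (-g, f)` of `H ×₂ H` satisfies `J² = -1`, and for a self-adjoint `A` it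
maps the graph of `A` onto its orthogonal complement. Hence `Pₙ (J u) = J (u - Pₙ u)`, so strong
convergence of `Pₙ` to the identity on the graph of `D`, which the approximation hypothesis gives
through `‖u - Pₙ u‖ ≤ ‖u - wₙ‖` for `wₙ` in the graph of `Dₙ`, transfers to strong convergence
to `0` on the orthogonal complement `J (graph D)`.
-/

section OrthogonalProjection

variable {𝕜 E ι : Type*} [RCLike 𝕜] [NormedAddCommGroup E] [InnerProductSpace 𝕜 E]

namespace Submodule

theorem norm_sub_starProjection_le (K : Submodule 𝕜 E) [K.HasOrthogonalProjection] (u : E)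
    {w : E} (hw : w ∈ K) : ‖u - K.starProjection u‖ ≤ ‖u - w‖ := by
  rw [starProjection_minimal]
  exact ciInf_le ⟨0, by rintro _ ⟨v, rfl⟩; positivity⟩ (⟨w, hw⟩ : K)

theorem starProjection_apply_of_orthogonal_eq_map (K : Submodule 𝕜 E)
    [K.HasOrthogonalProjection] {J : E →L[𝕜] E} (hJ : ∀ x, J (J x) = -x)
    (hK : Kᗮ = K.map (J : E →ₗ[𝕜] E)) (u : E) :
    K.starProjection (J u) = J (u - K.starProjection u) := by
  refine eq_starProjection_of_mem_orthogonal ?_ ?_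
  · obtain ⟨k, hk, hJk⟩ : u - K.starProjection u ∈ K.map (J : E →ₗ[𝕜] E) :=
      hK ▸ K.sub_starProjection_mem_orthogonal u
    rw [← hJk, ContinuousLinearMap.coe_coe, hJ]
    exact K.neg_mem hk
  · rw [← map_sub, sub_sub_cancel, hK]
    exact mem_map_of_mem (K.starProjection_apply_mem u)

end Submodule

open Submodule

variable {l : Filter ι} {K : Submodule 𝕜 E} {Kn : ι → Submodule 𝕜 E}
  [∀ n, (Kn n).HasOrthogonalProjection]

theorem tendsto_starProjection_apply_self {u : E} {w : ι → E} (hw : ∀ n, w n ∈ Kn n)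
    (hwu : Tendsto w l (𝓝 u)) : Tendsto (fun n => (Kn n).starProjection u) l (𝓝 u) := by
  rw [tendsto_iff_norm_sub_tendsto_zero] at hwu ⊢
  refine squeeze_zero (fun _ => norm_nonneg _) (fun n => ?_) hwu
  rw [norm_sub_rev, norm_sub_rev (w n)]
  exact (Kn n).norm_sub_starProjection_le u (hw n)

theorem tendsto_starProjection_of_orthogonal_eq_map [K.HasOrthogonalProjection]
    {J : E →L[𝕜] E} (hJ : ∀ x, J (J x) = -x)
    (hKn : ∀ n, (Kn n)ᗮ = (Kn n).map (J : E →ₗ[𝕜] E)) (hK : Kᗮ ≤ K.map (J : E →ₗ[𝕜] E))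
    (happrox : ∀ u ∈ K, ∃ w : ι → E, (∀ n, w n ∈ Kn n) ∧ Tendsto w l (𝓝 u)) (x : E) :
    Tendsto (fun n => (Kn n).starProjection x) l (𝓝 (K.starProjection x)) := by
  have on_K : ∀ u ∈ K, Tendsto (fun n => (Kn n).starProjection u) l (𝓝 u) := fun u hu => by
    obtain ⟨w, hw, hwu⟩ := happrox u hu
    exact tendsto_starProjection_apply_self hw hwu
  obtain ⟨u, hu, hJu⟩ := mem_map.mp (hK (K.sub_starProjection_mem_orthogonal x))
  have on_orthogonal : Tendsto (fun n => (Kn n).starProjection (J u)) l (𝓝 0) := by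
    simp_rw [(Kn _).starProjection_apply_of_orthogonal_eq_map hJ (hKn _)]
    simpa [Function.comp_def] using
      (J.continuous.tendsto _).comp ((tendsto_const_nhds (x := u)).sub (on_K u hu))
  have hx : K.starProjection x + J u = x := by
    rw [← ContinuousLinearMap.coe_coe J, hJu, add_sub_cancel]
  simpa only [← map_add, hx, add_zero] using
    (on_K _ (K.starProjection_apply_mem x)).add on_orthogonal

end OrthogonalProjection

section SkewSwap

variable (𝕜 F : Type*) [NormedField 𝕜] [NormedAddCommGroup F] [NormedSpace 𝕜 F]

noncomputable def skewSwapL2 : WithLp 2 (F × F) →L[𝕜] WithLp 2 (F × F) :=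
  (WithLp.prodContinuousLinearEquiv 2 𝕜 F F).symm.toContinuousLinearMap ∘L
    ((-ContinuousLinearMap.snd 𝕜 F F).prod (ContinuousLinearMap.fst 𝕜 F F)) ∘L
    (WithLp.prodContinuousLinearEquiv 2 𝕜 F F).toContinuousLinearMap

variable {𝕜 F}

@[simp]
theorem skewSwapL2_apply (x : WithLp 2 (F × F)) :
    skewSwapL2 𝕜 F x = WithLp.toLp 2 (-x.snd, x.fst) := rfl

theorem skewSwapL2_skewSwapL2 (x : WithLp 2 (F × F)) :
    skewSwapL2 𝕜 F (skewSwapL2 𝕜 F x) = -x := rfl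

theorem mem_map_skewSwapL2_iff {K : Submodule 𝕜 (WithLp 2 (F × F))} {x : WithLp 2 (F × F)} :
    x ∈ K.map (skewSwapL2 𝕜 F : WithLp 2 (F × F) →ₗ[𝕜] WithLp 2 (F × F)) ↔
      WithLp.toLp 2 (x.snd, -x.fst) ∈ K := by
  constructor
  · rintro ⟨y, hy, rfl⟩
    simp only [ContinuousLinearMap.coe_coe, skewSwapL2_apply, WithLp.toLp_fst, WithLp.toLp_snd,
      neg_neg]
    exact hy
  · exact fun h => ⟨_, h, (WithLp.ext_iff 2).mpr (Prod.ext (neg_neg _) rfl)⟩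

end SkewSwap

section Graph

variable {F ι : Type*} [NormedAddCommGroup F] [InnerProductSpace ℂ F]

theorem mem_graphL2_iff {A : F →ₗ.[ℂ] F} {x : WithLp 2 (F × F)} :
    x ∈ graphL2 A ↔ x.ofLp ∈ A.graph := Iff.rfl

theorem forall_mem_graphL2 {A : F →ₗ.[ℂ] F} {p : WithLp 2 (F × F) → Prop} :
    (∀ u ∈ graphL2 A, p u) ↔ ∀ f : A.domain, p (WithLp.toLp 2 ((f : F), A f)) := by
  constructor
  · exact fun h f => h _ (A.mem_graph f)
  · rintro h ⟨u⟩ hu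
    obtain ⟨f, rfl⟩ := A.mem_graph_iff'.mp hu
    exact h f

theorem orthogonal_graphL2 [CompleteSpace F] {A : F →ₗ.[ℂ] F} (hA : Dense (A.domain : Set F)) :
    (graphL2 A)ᗮ =
      (graphL2 A.adjoint).map (skewSwapL2 ℂ F : WithLp 2 (F × F) →ₗ[ℂ] WithLp 2 (F × F)) := by
  ext x
  rw [mem_map_skewSwapL2_iff, mem_graphL2_iff, LinearPMap.adjoint_graph_eq_graph_adjoint hA,
    Submodule.mem_adjoint_iff, Submodule.mem_orthogonal]
  simp [forall_mem_graphL2, WithLp.prod_inner_apply, add_comm]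

theorem IsSelfAdjoint.orthogonal_graphL2 [CompleteSpace F] {A : F →ₗ.[ℂ] F}
    (hA : IsSelfAdjoint A) :
    (graphL2 A)ᗮ = (graphL2 A).map (skewSwapL2 ℂ F : WithLp 2 (F × F) →ₗ[ℂ] WithLp 2 (F × F)) := by
  rw [_root_.orthogonal_graphL2 hA.dense_domain, LinearPMap.isSelfAdjoint_def.mp hA]

theorem exists_seq_mem_graphL2_tendsto {l : Filter ι} {A : F →ₗ.[ℂ] F} {An : ι → F →ₗ.[ℂ] F}
    (h : ∀ f : F, ∀ hf : f ∈ A.domain, ∃ (fn : ι → F) (hfn : ∀ n, fn n ∈ (An n).domain),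
      Tendsto fn l (𝓝 f) ∧ Tendsto (fun n => (An n) ⟨fn n, hfn n⟩) l (𝓝 (A ⟨f, hf⟩))) :
    ∀ u ∈ graphL2 A, ∃ w : ι → WithLp 2 (F × F), (∀ n, w n ∈ graphL2 (An n)) ∧
      Tendsto w l (𝓝 u) := by
  rw [forall_mem_graphL2]
  rintro ⟨f, hf⟩
  obtain ⟨fn, hfn, hf_lim, hAf_lim⟩ := h f hf
  exact ⟨fun n => WithLp.toLp 2 (fn n, An n ⟨fn n, hfn n⟩), fun n => (An n).mem_graph ⟨fn n, hfn n⟩,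
    ((WithLp.prod_continuous_toLp 2 F F).tendsto _).comp (hf_lim.prodMk_nhds hAf_lim)⟩

theorem IsOrthProjOnto.hasOrthogonalProjection {K : Submodule ℂ (WithLp 2 (F × F))}
    {P : WithLp 2 (F × F) → WithLp 2 (F × F)} (hP : IsOrthProjOnto K P) :
    K.HasOrthogonalProjection :=
  ⟨fun x => ⟨P x, hP x⟩⟩

theorem IsOrthProjOnto.eq_starProjection {K : Submodule ℂ (WithLp 2 (F × F))}
    [K.HasOrthogonalProjection] {P : WithLp 2 (F × F) → WithLp 2 (F × F)}
    (hP : IsOrthProjOnto K P) : P = K.starProjection :=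
  funext fun x => (Submodule.eq_starProjection_of_mem_orthogonal (hP x).1 (hP x).2).symm

end Graph

/-- If for every `f ∈ dom D` there is a sequence `fₙ ∈ dom Dₙ` with
`(fₙ, Dₙ fₙ) → (f, D f)`, then the orthogonal projections onto the graphs of the
self-adjoint operators `Dₙ` converge strongly to the orthogonal projection onto the
graph of `D`. -/
theorem graph_projections_strongly_converge
    (D : H →ₗ.[ℂ] H) (Dn : ℕ → H →ₗ.[ℂ] H)
    (hD : IsSelfAdjoint D) (hDn : ∀ n, IsSelfAdjoint (Dn n))
    (P : WithLp 2 (H × H) → WithLp 2 (H × H))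
    (Pn : ℕ → WithLp 2 (H × H) → WithLp 2 (H × H))
    (hP : IsOrthProjOnto (graphL2 D) P)
    (hPn : ∀ n, IsOrthProjOnto (graphL2 (Dn n)) (Pn n))
    (happrox : ∀ f : H, ∀ hf : f ∈ D.domain,
      ∃ (fn : ℕ → H) (hfn : ∀ n, fn n ∈ (Dn n).domain),
        Tendsto fn atTop (𝓝 f) ∧
        Tendsto (fun n => (Dn n) ⟨fn n, hfn n⟩) atTop (𝓝 (D ⟨f, hf⟩))) :
    ∀ x, Tendsto (fun n => Pn n x) atTop (𝓝 (P x)) := by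
  have := hP.hasOrthogonalProjection
  have := fun n => (hPn n).hasOrthogonalProjection
  rw [hP.eq_starProjection, funext fun n => (hPn n).eq_starProjection]
  exact tendsto_starProjection_of_orthogonal_eq_map skewSwapL2_skewSwapL2
    (fun n => (hDn n).orthogonal_graphL2) hD.orthogonal_graphL2.le
    (exists_seq_mem_graphL2_tendsto happrox)
end

section
/- Let D_n, D be self-adjoint operators on a separable Hilbert space H. If the orthogonal projections onto the graphs of D_n converge strongly to the orthogonal projection onto the graph of D, then D_n converges to D in the strong resolvent sense. -/
/-!
For `D` symmetric and `D u - i u = g`, the vector `(i g, g) - (u, D u)` is orthogonal to the graph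
of `D`. Hence the orthogonal projection onto the graph sends `(i g, g)` to `(R g, D (R g))`, and the
resolvent `R g` is the first component of that projection. Strong convergence of the projections
therefore gives strong convergence of the resolvents.
-/

open Filter Topology

variable {H : Type*} [NormedAddCommGroup H] [InnerProductSpace ℂ H] [CompleteSpace H]
  [TopologicalSpace.SeparableSpace H]

/-- `R` is the resolvent of the (possibly unbounded) operator `D` at the point `i`. -/
def IsResolventAtI (D : H →ₗ.[ℂ] H) (R : H → H) : Prop :=
  ∀ g : H, ∃ h : R g ∈ D.domain, D ⟨R g, h⟩ - Complex.I • R g = g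

section

variable {E : Type*} [NormedAddCommGroup E] [InnerProductSpace ℂ E]

theorem IsOrthProjOnto.apply_eq {K : Submodule ℂ (WithLp 2 (E × E))}
    {P : WithLp 2 (E × E) → WithLp 2 (E × E)} (hP : IsOrthProjOnto K P)
    {x p : WithLp 2 (E × E)} (hp : p ∈ K) (hxp : x - p ∈ Kᗮ) : P x = p := by
  have hmem : P x - p ∈ K ⊓ Kᗮ :=
    ⟨K.sub_mem (hP x).1 hp, sub_sub_sub_cancel_left p (P x) x ▸ Kᗮ.sub_mem hxp (hP x).2⟩
  rwa [K.inf_orthogonal_eq_bot, Submodule.mem_bot, sub_eq_zero] at hmem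

theorem mem_graphL2_iff_s2 {D : E →ₗ.[ℂ] E} {y : WithLp 2 (E × E)} :
    y ∈ graphL2 D ↔ ∃ u : D.domain, WithLp.toLp 2 ((u : E), D u) = y := by
  simp only [graphL2, Submodule.mem_comap, LinearPMap.mem_graph_iff]
  refine exists_congr fun u => ?_
  rw [WithLp.ext_iff, Prod.ext_iff]
  simp

theorem IsSelfAdjoint.isFormalAdjoint_self [CompleteSpace E] {A : E →ₗ.[ℂ] E}
    (hA : IsSelfAdjoint A) : A.IsFormalAdjoint A := by
  have h := LinearPMap.adjoint_isFormalAdjoint hA.dense_domain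
  rwa [LinearPMap.isSelfAdjoint_def.mp hA] at h

/-- Against `(w, D w)`, symmetry of `D` turns the inner product into
`⟪w, i g - u⟫ - i ⟪w, D u⟫ = ⟪w, i g - u - i (g + i u)⟫ = 0`. -/
theorem sub_mem_orthogonal_graphL2 {D : E →ₗ.[ℂ] E} (hD : D.IsFormalAdjoint D) {g : E}
    (u : D.domain) (hu : D u - Complex.I • (u : E) = g) :
    WithLp.toLp 2 (Complex.I • g, g) - WithLp.toLp 2 ((u : E), D u) ∈ (graphL2 D)ᗮ := by
  rw [Submodule.mem_orthogonal]
  rintro _ hw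
  obtain ⟨w, rfl⟩ := mem_graphL2_iff_s2.mp hw
  have hDu : D u = g + Complex.I • (u : E) := eq_add_of_sub_eq hu
  simp only [WithLp.prod_inner_apply, inner_sub_right, hD w u, hDu, inner_add_right,
    inner_smul_right]
  linear_combination -inner ℂ (w : E) (u : E) * Complex.I_sq

theorem IsOrthProjOnto.fst_apply_eq_resolvent {D : E →ₗ.[ℂ] E} (hD : D.IsFormalAdjoint D)
    {P : WithLp 2 (E × E) → WithLp 2 (E × E)} (hP : IsOrthProjOnto (graphL2 D) P)
    {R : E → E} (hR : IsResolventAtI D R) (g : E) :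
    (P (WithLp.toLp 2 (Complex.I • g, g))).fst = R g := by
  obtain ⟨hmem, hRg⟩ := hR g
  rw [hP.apply_eq (mem_graphL2_iff_s2.mpr ⟨⟨R g, hmem⟩, rfl⟩)
    (sub_mem_orthogonal_graphL2 hD ⟨R g, hmem⟩ hRg)]
  rfl

end

/-- If the orthogonal projections onto the graphs of the self-adjoint operators `Dₙ`
converge strongly to the orthogonal projection onto the graph of the self-adjoint
operator `D`, then `Dₙ → D` in the strong resolvent sense. -/
theorem strong_resolvent_convergence_of_graph_projection_convergence
    (D : H →ₗ.[ℂ] H) (Dn : ℕ → H →ₗ.[ℂ] H)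
    (hD : IsSelfAdjoint D) (hDn : ∀ n, IsSelfAdjoint (Dn n))
    (P : WithLp 2 (H × H) → WithLp 2 (H × H))
    (Pn : ℕ → WithLp 2 (H × H) → WithLp 2 (H × H))
    (hP : IsOrthProjOnto (graphL2 D) P)
    (hPn : ∀ n, IsOrthProjOnto (graphL2 (Dn n)) (Pn n))
    (hproj : ∀ x, Tendsto (fun n => Pn n x) atTop (𝓝 (P x)))
    (R : H → H) (Rn : ℕ → H → H)
    (hR : IsResolventAtI D R) (hRn : ∀ n, IsResolventAtI (Dn n) (Rn n)) :
    ∀ g : H, Tendsto (fun n => Rn n g) atTop (𝓝 (R g)) := by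
  intro g
  have hfst := ((WithLp.continuous_fst 2 H H).tendsto _).comp
    (hproj (WithLp.toLp 2 (Complex.I • g, g)))
  simpa only [Function.comp_def, hP.fst_apply_eq_resolvent hD.isFormalAdjoint_self hR,
    fun n => (hPn n).fst_apply_eq_resolvent (hDn n).isFormalAdjoint_self (hRn n)] using hfst
end
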